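/- In an involutive quantale Q that is a projection b ∈ Q with b·b = b = b*: the down-segment ↓b is an involutive subquantale of Q, and if Q is stably Gelfand then so is ↓b. -/

import Mathlib

/-- An involutive quantale: a complete lattice with an associative multiplication
distributing over arbitrary joins in each variable, and a join-preserving
involution that is an anti-automorphism of period 2. -/
class InvQuantale (Q : Type*) extends CompleteLattice Q, Semigroup Q, StarMul Q where
  mul_sSup : ∀ (a : Q) (S : Set Q), a * sSup S = ⨆ s ∈ S, a * s
  sSup_mul : ∀ (S : Set Q) (a : Q), sSup S * a = ⨆ s ∈ S, s * a
  star_sSup : ∀ (S : Set Q), star (sSup S) = ⨆ s ∈ S, star s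

/-- The set `I_b(Q)` of partial units relative to `b`. -/
def Ib {Q : Type*} [InvQuantale Q] (b : Q) : Set Q :=
  {a | star a * a ≤ b ∧ a * star a ≤ b ∧ a * b ≤ a ∧ b * a ≤ a}

/-- `Q` is stably Gelfand if `a a* a ≤ a` implies `a a* a = a`. -/
def IsStablyGelfand (Q : Type*) [InvQuantale Q] : Prop :=
  ∀ a : Q, a * star a * a ≤ a → a * star a * a = a

theorem mul_le_of_le_idempotent {α : Type*} [Mul α] [Preorder α] [MulLeftMono α]
    [MulRightMono α] {a c b : α} (hb : b * b = b) (ha : a ≤ b) (hc : c ≤ b) : a * c ≤ b :=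
  hb ▸ mul_le_mul' ha hc

theorem monotone_of_map_sup {α β : Type*} [SemilatticeSup α] [SemilatticeSup β] {f : α → β}
    (hf : ∀ x y, f (x ⊔ y) = f x ⊔ f y) : Monotone f := fun x y h => by
  rw [← sup_eq_right.2 h, hf]
  exact le_sup_left

namespace InvQuantale

variable {Q : Type*} [InvQuantale Q]

theorem mul_sup (a x y : Q) : a * (x ⊔ y) = a * x ⊔ a * y := by
  rw [← sSup_pair, mul_sSup, iSup_pair]

theorem sup_mul (x y a : Q) : (x ⊔ y) * a = x * a ⊔ y * a := by
  rw [← sSup_pair, sSup_mul, iSup_pair]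

theorem star_sup (x y : Q) : star (x ⊔ y) = star x ⊔ star y := by
  rw [← sSup_pair, star_sSup, iSup_pair]

instance : MulLeftMono Q := ⟨fun a _ _ h => monotone_of_map_sup (mul_sup a) h⟩

instance : MulRightMono Q :=
  ⟨fun a _ _ h => monotone_of_map_sup (f := (· * a)) (fun x y => sup_mul x y a) h⟩

theorem star_mono : Monotone (star : Q → Q) := monotone_of_map_sup star_sup

theorem star_le_of_le_selfAdjoint {a b : Q} (hb : star b = b) (ha : a ≤ b) : star a ≤ b :=
  hb ▸ star_mono ha

end InvQuantale

theorem downSegment_subquantale {Q : Type*} [InvQuantale Q]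
    (b : Q) (hb : b * b = b) (hb' : star b = b) :
    (∀ a c : Q, a ≤ b → c ≤ b → a * c ≤ b) ∧
    (∀ a : Q, a ≤ b → star a ≤ b) ∧
    (IsStablyGelfand Q →
      ∀ a : Q, a ≤ b → a * star a * a ≤ a → a * star a * a = a) :=
  ⟨fun _ _ => mul_le_of_le_idempotent hb,
    fun _ => InvQuantale.star_le_of_le_selfAdjoint hb',
    fun hQ a _ => hQ a⟩
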